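/- Let G be a finite connected simple graph with ind-match(G) ≥ 2 and min-match(G) = match(G). Then G has no perfect matching, i.e., there is no matching M of G such that every vertex of G belongs to some edge of M. -/

import Mathlib

/-!
If `G` has a perfect matching `P` and `min-match(G) = match(G)`, every maximal matching has at
least `|P|` edges and therefore covers all vertices: `G` is randomly matchable. In a randomly
matchable graph every path `b - a - m - c` closes up to `b ~ c`: extend `{ab, mc}` to a maximal
matching, trade `ab` and `mc` for `am`, and extend again; the new edge at `b` must end at the only
other vertex the trade uncovered, namely `c`. Hence, for a fixed vertex `c`, an edge whose ends are
both neither equal nor adjacent to `c` forces the same for every edge next to it, and in a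
connected graph this spreads up to `c` itself. An induced matching `{ab, cd}` provides such an edge.
-/

variable {V : Type*}

/-- A matching of `G`: a set of edges of `G` that are pairwise disjoint. -/
def IsMatchingSet (G : SimpleGraph V) (M : Set (Sym2 V)) : Prop :=
  (∀ e ∈ M, e ∈ G.edgeSet) ∧
    ∀ e ∈ M, ∀ f ∈ M, e ≠ f → ∀ v : V, v ∈ e → v ∉ f

/-- A maximal matching of `G`: a matching `M` such that `M ∪ {e}` is not a matching
for every edge `e` of `G` not in `M`. -/
def IsMaximalMatchingSet (G : SimpleGraph V) (M : Set (Sym2 V)) : Prop :=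
  IsMatchingSet G M ∧
    ∀ e ∈ G.edgeSet, e ∉ M → ¬ IsMatchingSet G (insert e M)

/-- An induced matching of `G`: a matching `M` such that no edge of `G` meets
two distinct edges of `M`. -/
def IsInducedMatchingSet (G : SimpleGraph V) (M : Set (Sym2 V)) : Prop :=
  IsMatchingSet G M ∧
    ∀ e ∈ M, ∀ f ∈ M, e ≠ f → ∀ g ∈ G.edgeSet,
      ¬ ((∃ v : V, v ∈ g ∧ v ∈ e) ∧ (∃ v : V, v ∈ g ∧ v ∈ f))

/-- The matching number of `G`: the maximum size of a matching. -/
noncomputable def matchNum (G : SimpleGraph V) : ℕ :=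
  sSup {n | ∃ M : Set (Sym2 V), IsMatchingSet G M ∧ M.ncard = n}

/-- The minimum matching number of `G`: the minimum size of a maximal matching. -/
noncomputable def minMatchNum (G : SimpleGraph V) : ℕ :=
  sInf {n | ∃ M : Set (Sym2 V), IsMaximalMatchingSet G M ∧ M.ncard = n}

/-- The induced matching number of `G`: the maximum size of an induced matching. -/
noncomputable def indMatchNum (G : SimpleGraph V) : ℕ :=
  sSup {n | ∃ M : Set (Sym2 V), IsInducedMatchingSet G M ∧ M.ncard = n}
section

variable {G : SimpleGraph V} {M N : Set (Sym2 V)}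

def coveredVerts (M : Set (Sym2 V)) : Set V := ⋃ e ∈ M, {v | v ∈ e}

@[simp]
lemma mem_coveredVerts {v : V} : v ∈ coveredVerts M ↔ ∃ e ∈ M, v ∈ e := by
  simp [coveredVerts]

lemma isMatchingSet_singleton {e : Sym2 V} (he : e ∈ G.edgeSet) : IsMatchingSet G {e} :=
  ⟨by simpa using he, by simp⟩

namespace IsMatchingSet

lemma mono (hM : IsMatchingSet G M) (h : N ⊆ M) : IsMatchingSet G N :=
  ⟨fun e he ↦ hM.1 e (h he), fun e he f hf ↦ hM.2 e (h he) f (h hf)⟩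

lemma eq_of_mem (hM : IsMatchingSet G M) {e f : Sym2 V} (he : e ∈ M) (hf : f ∈ M) {v : V}
    (hve : v ∈ e) (hvf : v ∈ f) : e = f := by
  by_contra hef
  exact hM.2 e he f hf hef v hve hvf

lemma ncard_coveredVerts [Finite V] (hM : IsMatchingSet G M) :
    (coveredVerts M).ncard = 2 * M.ncard := by
  have hpair : ∀ e ∈ M, ({v | v ∈ e} : Set V).ncard = 2 := by
    intro e he
    induction e using Sym2.ind with
    | _ x y =>
      have hxy : x ≠ y := (G.mem_edgeSet.mp (hM.1 _ he)).ne
      have : ({v | v ∈ s(x, y)} : Set V) = {x, y} := by ext; simp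
      rw [this, Set.ncard_pair hxy]
  have hdisj : M.PairwiseDisjoint (fun e ↦ ({v | v ∈ e} : Set V)) :=
    fun e he f hf hef ↦ Set.disjoint_left.mpr fun v hve hvf ↦ hM.2 e he f hf hef v hve hvf
  rw [coveredVerts, Set.toFinite M |>.ncard_biUnion (fun _ _ ↦ Set.toFinite _) hdisj,
    finsum_mem_congr rfl hpair, ← finsum_one, mul_finsum_mem, mul_one]

lemma exists_maximal_superset [Finite V] (hM : IsMatchingSet G M) :
    ∃ M', IsMaximalMatchingSet G M' ∧ M ⊆ M' := by
  obtain ⟨M', hMM', hmax⟩ := Finite.exists_le_maximal (p := IsMatchingSet G) hM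
  refine ⟨M', ⟨hmax.prop, fun e _ he hins ↦ he ?_⟩, hMM'⟩
  exact hmax.le_of_ge hins (Set.subset_insert e M') (Set.mem_insert e M')

lemma insert (hM : IsMatchingSet G M) {e : Sym2 V} (he : e ∈ G.edgeSet)
    (hfree : ∀ f ∈ M, ∀ v ∈ e, v ∉ f) : IsMatchingSet G (insert e M) := by
  refine ⟨?_, ?_⟩
  · rintro f (rfl | hf)
    exacts [he, hM.1 f hf]
  · rintro f (rfl | hf) g (rfl | hg) hfg v hvf hvg
    · exact hfg rfl
    · exact hfree g hg v hvf hvg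
    · exact hfree f hf v hvg hvf
    · exact hM.2 f hf g hg hfg v hvf hvg

lemma exchange (hM : IsMatchingSet G M) {a b m c : V} (hab : s(a, b) ∈ M) (hmc : s(m, c) ∈ M)
    (ham : G.Adj a m) : IsMatchingSet G (Insert.insert s(a, m) (M \ {s(a, b), s(m, c)})) := by
  refine (hM.mono Set.sdiff_subset).insert ham fun f ⟨hf, hfne⟩ v hv hvf ↦ hfne ?_
  rcases Sym2.mem_iff.mp hv with rfl | rfl
  · exact Or.inl (hM.eq_of_mem hf hab hvf (Sym2.mem_mk_left _ _))
  · exact Or.inr (hM.eq_of_mem hf hmc hvf (Sym2.mem_mk_left _ _))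

lemma partner_notMem_coveredVerts (hM : IsMatchingSet G M) (hNM : N ⊆ M) {v z : V}
    (hvz : s(v, z) ∈ M) (hv : v ∉ coveredVerts N) : z ∉ coveredVerts N := by
  rw [mem_coveredVerts] at hv ⊢
  rintro ⟨f, hf, hzf⟩
  refine hv ⟨f, hf, ?_⟩
  rw [hM.eq_of_mem (hNM hf) hvz hzf (Sym2.mem_mk_right v z)]
  exact Sym2.mem_mk_left v z

end IsMatchingSet

lemma bddAbove_ncard [Finite V] (p : Set (Sym2 V) → Prop) :
    BddAbove {n | ∃ M : Set (Sym2 V), p M ∧ M.ncard = n} :=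
  ⟨Nat.card (Sym2 V), by rintro _ ⟨M, -, rfl⟩; exact Set.ncard_le_card M⟩

lemma IsMatchingSet.ncard_le_matchNum [Finite V] (hM : IsMatchingSet G M) :
    M.ncard ≤ matchNum G :=
  le_csSup (bddAbove_ncard _) ⟨M, hM, rfl⟩

lemma IsMaximalMatchingSet.minMatchNum_le_ncard (hM : IsMaximalMatchingSet G M) :
    minMatchNum G ≤ M.ncard :=
  Nat.sInf_le ⟨M, hM, rfl⟩

def IsRandomlyMatchable (G : SimpleGraph V) : Prop :=
  ∀ M, IsMaximalMatchingSet G M → ∀ v, v ∈ coveredVerts M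

theorem isRandomlyMatchable_of_minMatchNum_eq_matchNum [Finite V]
    (heq : minMatchNum G = matchNum G) {P : Set (Sym2 V)} (hP : IsMatchingSet G P)
    (hPcov : coveredVerts P = Set.univ) : IsRandomlyMatchable G := by
  intro M hM
  have hPM : P.ncard ≤ M.ncard := hP.ncard_le_matchNum.trans (heq ▸ hM.minMatchNum_le_ncard)
  suffices coveredVerts M = Set.univ by simp [this]
  refine Set.eq_of_subset_of_ncard_le (Set.subset_univ _) ?_ Set.finite_univ
  rw [← hPcov, hP.ncard_coveredVerts, hM.1.ncard_coveredVerts]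
  omega

namespace IsRandomlyMatchable

variable [Finite V] (hG : IsRandomlyMatchable G)
include hG

theorem adj_of_three_path {a b m c : V} (hab : G.Adj a b) (ham : G.Adj a m) (hmc : G.Adj m c)
    (hbm : b ≠ m) (hac : a ≠ c) (hbc : b ≠ c) : G.Adj b c := by
  have hpair : IsMatchingSet G {s(a, b), s(m, c)} :=
    (isMatchingSet_singleton hmc).insert hab (by
      simp only [Set.mem_singleton_iff, forall_eq, Sym2.mem_iff]
      grind [ham.ne])
  obtain ⟨M₁, hM₁, hpairM₁⟩ := hpair.exists_maximal_superset
  have hab₁ : s(a, b) ∈ M₁ := hpairM₁ (by simp)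
  have hmc₁ : s(m, c) ∈ M₁ := hpairM₁ (by simp)
  set M' := insert s(a, m) (M₁ \ {s(a, b), s(m, c)})
  have hb : b ∉ coveredVerts M' := by
    rw [mem_coveredVerts]
    rintro ⟨f, rfl | ⟨hf, hfne⟩, hbf⟩
    · rcases Sym2.mem_iff.mp hbf with rfl | rfl
      exacts [hab.ne rfl, hbm rfl]
    · exact hfne (Or.inl (hM₁.1.eq_of_mem hf hab₁ hbf (Sym2.mem_mk_right a b)))
  have hcov : ∀ v, v ≠ b → v ≠ c → v ∈ coveredVerts M' := by
    intro v hvb hvc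
    obtain ⟨f, hf, hvf⟩ := mem_coveredVerts.mp (hG M₁ hM₁ v)
    rw [mem_coveredVerts]
    by_cases hfab : f = s(a, b)
    · obtain rfl : v = a := by simpa [hfab, hvb] using hvf
      exact ⟨_, Set.mem_insert _ _, Sym2.mem_mk_left v m⟩
    by_cases hfmc : f = s(m, c)
    · obtain rfl : v = m := by simpa [hfmc, hvc] using hvf
      exact ⟨_, Set.mem_insert _ _, Sym2.mem_mk_right a v⟩
    exact ⟨f, Or.inr ⟨hf, by simp [hfab, hfmc]⟩, hvf⟩
  obtain ⟨M₂, hM₂, hM'M₂⟩ := (hM₁.1.exchange hab₁ hmc₁ ham).exists_maximal_superset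
  obtain ⟨g, hg, hbg⟩ := mem_coveredVerts.mp (hG M₂ hM₂ b)
  obtain ⟨z, rfl⟩ := Sym2.mem_iff_exists.mp hbg
  have hbz : G.Adj b z := hM₂.1.1 _ hg
  obtain rfl : z = c := by
    by_contra hzc
    exact hM₂.1.partner_notMem_coveredVerts hM'M₂ hg hb (hcov z hbz.ne' hzc)
  exact hbz

theorem eq_or_adj_of_adj (hconn : G.Preconnected) {a b : V} (hab : G.Adj a b) (c : V) :
    a = c ∨ G.Adj a c ∨ b = c ∨ G.Adj b c := by
  by_contra! h
  let Far (x : V) : Prop := x ≠ c ∧ ¬G.Adj x c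
  have hstep {u v w : V} (huw : G.Adj u w) (hu : Far u) (hw : Far w) (huv : G.Adj u v) :
      Far v := by
    refine ⟨by rintro rfl; exact hu.2 huv, fun hvc ↦ hw.2 ?_⟩
    exact hG.adj_of_three_path huw huv hvc (by rintro rfl; exact hw.2 hvc) hu.1 hw.1
  have hreach (v : V) (hv : G.Reachable a v) : ∃ w, G.Adj v w ∧ Far v ∧ Far w := by
    rw [SimpleGraph.reachable_iff_reflTransGen] at hv
    induction hv with
    | refl => exact ⟨b, hab, ⟨h.1, h.2.1⟩, h.2.2.1, h.2.2.2⟩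
    | tail _ huv ih =>
      obtain ⟨w, huw, hu, hw⟩ := ih
      exact ⟨_, huv.symm, hstep huw hu hw huv, hu⟩
  obtain ⟨-, -, hc, -⟩ := hreach c (hconn a c)
  exact hc.1 rfl

end IsRandomlyMatchable

lemma IsInducedMatchingSet.not_adj (hM : IsInducedMatchingSet G M) {e f : Sym2 V} (he : e ∈ M)
    (hf : f ∈ M) (hef : e ≠ f) {x y : V} (hx : x ∈ e) (hy : y ∈ f) : ¬G.Adj x y :=
  fun hxy ↦ hM.2 e he f hf hef s(x, y) hxy
    ⟨⟨x, Sym2.mem_mk_left x y, hx⟩, y, Sym2.mem_mk_right x y, hy⟩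

lemma exists_adj_of_two_le_indMatchNum [Finite V] (h : 2 ≤ indMatchNum G) :
    ∃ a b c, G.Adj a b ∧ a ≠ c ∧ ¬G.Adj a c ∧ b ≠ c ∧ ¬G.Adj b c := by
  have hempty : IsInducedMatchingSet G ∅ := ⟨⟨by simp, by simp⟩, by simp⟩
  obtain ⟨M, hM, hcard⟩ : indMatchNum G ∈ {n | ∃ M, IsInducedMatchingSet G M ∧ M.ncard = n} :=
    Nat.sSup_mem ⟨0, ∅, hempty, Set.ncard_empty _⟩ (bddAbove_ncard _)
  obtain ⟨e, f, he, hf, hef⟩ := (Set.one_lt_ncard_iff).mp (by omega : 1 < M.ncard)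
  induction e using Sym2.ind with | _ a b => ?_
  induction f using Sym2.ind with | _ c d => ?_
  have hne {x : V} (hx : x ∈ s(a, b)) : x ≠ c :=
    fun hxc ↦ hM.1.2 _ he _ hf hef x hx (hxc ▸ Sym2.mem_mk_left c d)
  refine ⟨a, b, c, hM.1.1 _ he, hne (Sym2.mem_mk_left a b), ?_, hne (Sym2.mem_mk_right a b), ?_⟩
  exacts [hM.not_adj he hf hef (Sym2.mem_mk_left a b) (Sym2.mem_mk_left c d),
    hM.not_adj he hf hef (Sym2.mem_mk_right a b) (Sym2.mem_mk_left c d)]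

end

theorem stmt_3 (V : Type) [Fintype V] (G : SimpleGraph V) (hconn : G.Connected)
    (hind : 2 ≤ indMatchNum G) (heq : minMatchNum G = matchNum G) :
    ¬ ∃ M : Set (Sym2 V), IsMatchingSet G M ∧ ∀ v : V, ∃ e ∈ M, v ∈ e := by
  rintro ⟨P, hP, hPcov⟩
  have hG : IsRandomlyMatchable G := isRandomlyMatchable_of_minMatchNum_eq_matchNum heq hP
    (Set.eq_univ_of_forall fun v ↦ mem_coveredVerts.mpr (hPcov v))
  obtain ⟨a, b, c, hab, hac, hnac, hbc, hnbc⟩ := exists_adj_of_two_le_indMatchNum hind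
  rcases hG.eq_or_adj_of_adj hconn.preconnected hab c with h | h | h | h <;> contradiction
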